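/- Uniform fourth-moment bound for add-cube differences: let P_n, P'_n be independent Poisson processes on [0,1]^d with intensity nκ where κ is a bounded density, and let z_j be lattice points with Q(z_j) = (−1/2,1/2]^d + z_j intersecting [0,n^{1/d}]^d. Then for every fixed (r,s), sup_{n,j} E[ |β_q^{r,s}(K(n^{1/d}P_n ∪ (n^{1/d}P'_n ∩ Q(z_j)))) − β_q^{r,s}(K(n^{1/d}P_n))|^4 ] < ∞. -/

import Mathlib

set_option autoImplicit false

open Submodule

/-- An abstract simplicial complex on vertex type `V`: a collection of finite nonempty
subsets closed under taking nonempty subsets. -/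
def IsComplex {V : Type*} (K : Set (Finset V)) : Prop :=
  ∀ σ ∈ K, σ.Nonempty ∧ ∀ τ : Finset V, τ ⊆ σ → τ.Nonempty → τ ∈ K

/-- The space of all `F₂`-chains on the vertex type `V`: the free `F₂`-vector space on
all finite subsets of `V`. -/
abbrev Chain (V : Type*) := Finset V →₀ ZMod 2

/-- The boundary map with `F₂`-coefficients, sending a simplex to the sum of its
codimension-one faces. -/
noncomputable def bdry (V : Type*) : Chain V →ₗ[ZMod 2] Chain V := by
  classical
  exact Finsupp.lsum (ZMod 2) fun σ =>
    LinearMap.toSpanSingleton (ZMod 2) (Chain V) (∑ x ∈ σ, Finsupp.single (σ.erase x) 1)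

/-- `C_q(K)`: the chain group of a complex `K`, the `F₂`-span of its `q`-simplices,
viewed as a subspace of the free `F₂`-vector space on all finite vertex sets. -/
noncomputable def chainGroup {V : Type*} (K : Set (Finset V)) (q : ℕ) :
    Submodule (ZMod 2) (Chain V) :=
  Submodule.span (ZMod 2)
    {c | ∃ σ ∈ K, σ.card = q + 1 ∧ c = Finsupp.single σ (1 : ZMod 2)}

/-- `Z_q(K)`: the cycle group of a complex `K`. -/
noncomputable def cycleGroup {V : Type*} (K : Set (Finset V)) (q : ℕ) :
    Submodule (ZMod 2) (Chain V) :=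
  chainGroup K q ⊓ LinearMap.ker (bdry V)

/-- `B_q(K)`: the boundary group of a complex `K`. -/
noncomputable def boundaryGroup {V : Type*} (K : Set (Finset V)) (q : ℕ) :
    Submodule (ZMod 2) (Chain V) :=
  Submodule.map (bdry V) (chainGroup K (q + 1))

/-- The `(r,s)`-persistent Betti number of a filtration
`Kf`: `dim (Z_q(K_r) / (Z_q(K_r) ∩ B_q(K_s)))`. -/
noncomputable def pBetti {V : Type*} (Kf : ℝ → Set (Finset V)) (q : ℕ) (r s : ℝ) : ℕ :=
  Module.finrank (ZMod 2)
    (↥(cycleGroup (Kf r) q) ⧸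
      (Submodule.comap (cycleGroup (Kf r) q).subtype (boundaryGroup (Kf s) q) :
        Submodule (ZMod 2) ↥(cycleGroup (Kf r) q)))

/-- Points of `ℝ^d`. -/
abbrev Pt (d : ℕ) := EuclideanSpace ℝ (Fin d)

/-- The Čech complex at scale `r` of a set `S ⊆ ℝ^d`: all finite nonempty `σ ⊆ S` whose
closed `r`-balls have a common point. -/
def cechCx (d : ℕ) (r : ℝ) (S : Set (Pt d)) : Set (Finset (Pt d)) :=
  {σ | ↑σ ⊆ S ∧ σ.Nonempty ∧ (⋂ x ∈ (σ : Set (Pt d)), Metric.closedBall x r).Nonempty}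

/-- The Vietoris–Rips complex at scale `r` of a set `S ⊆ ℝ^d`: all finite nonempty
`σ ⊆ S` of diameter at most `r`. -/
def ripsCx (d : ℕ) (r : ℝ) (S : Set (Pt d)) : Set (Finset (Pt d)) :=
  {σ | ↑σ ⊆ S ∧ σ.Nonempty ∧ Metric.diam (σ : Set (Pt d)) ≤ r}

/-- The `(r,s)`-persistent Betti number of the filtration `Kx` (Čech or Rips) built on the
point set `S ⊆ ℝ^d`. -/
noncomputable def pBettiPts {d : ℕ} (Kx : ℝ → Set (Pt d) → Set (Finset (Pt d)))
    (q : ℕ) (r s : ℝ) (S : Set (Pt d)) : ℕ :=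
  pBetti (fun t => Kx t S) q r s

open MeasureTheory in
/-- A point process `P` on `ℝ^d` is a Poisson point process with intensity function `f`
(w.r.t. the probability measure `μ`) if it is almost surely locally finite, the number of
its points in a region `A` is Poisson distributed with mean `∫ x in A, f x`, and the
point counts in disjoint regions are independent. -/
structure IsPoissonPP {Ω : Type*} [MeasurableSpace Ω] (μ : Measure Ω) {d : ℕ}
    (f : Pt d → ℝ) (P : Ω → Set (Pt d)) : Prop where
  locallyFinite : ∀ᵐ ω ∂μ, ∀ C : Set (Pt d), IsCompact C → (P ω ∩ C).Finite
  counts : ∀ A : Set (Pt d), MeasurableSet A → IntegrableOn f A volume →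
    ∀ n : ℕ, μ {ω | (P ω ∩ A).ncard = n ∧ (P ω ∩ A).Finite} =
      ENNReal.ofReal (Real.exp (-(∫ x in A, f x)) * (∫ x in A, f x) ^ n / n.factorial)
  indep : ∀ A B : Set (Pt d), MeasurableSet A → MeasurableSet B → Disjoint A B →
    ∀ sA sB : Set ℕ,
      μ ({ω | (P ω ∩ A).ncard ∈ sA} ∩ {ω | (P ω ∩ B).ncard ∈ sB}) =
        μ {ω | (P ω ∩ A).ncard ∈ sA} * μ {ω | (P ω ∩ B).ncard ∈ sB}

open MeasureTheory in
/-- Two point processes `P`, `P'` are independent if all their point counts are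
independent. -/
def IndepPP {Ω : Type*} [MeasurableSpace Ω] (μ : Measure Ω) {d : ℕ}
    (P P' : Ω → Set (Pt d)) : Prop :=
  ∀ A B : Set (Pt d), MeasurableSet A → MeasurableSet B → ∀ sA sB : Set ℕ,
    μ ({ω | (P ω ∩ A).ncard ∈ sA} ∩ {ω | (P' ω ∩ B).ncard ∈ sB}) =
      μ {ω | (P ω ∩ A).ncard ∈ sA} * μ {ω | (P' ω ∩ B).ncard ∈ sB}

/-- The centered cube `[-c/2, c/2]^d`. -/
def cubeC (d : ℕ) (c : ℝ) : Set (Pt d) := {x | ∀ i, |x i| ≤ c / 2}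

/-- The half-open unit cube `(-1/2, 1/2]^d + z` centered at `z`. -/
def cubeQ {d : ℕ} (z : Pt d) : Set (Pt d) :=
  {x | ∀ i, z i - 1 / 2 < x i ∧ x i ≤ z i + 1 / 2}

/-- The cube `[0, c]^d`. -/
def cube0 (d : ℕ) (c : ℝ) : Set (Pt d) := {x | ∀ i, 0 ≤ x i ∧ x i ≤ c}

/-!
Adding the points `T = n^{1/d} P'_n ∩ Q(z)` only creates simplices that contain a point of `T`;
all their vertices lie in the ball `B` of radius `√d/2 + 2s` around `z`. A rank count shows that
a persistent Betti number moves by at most the number of new simplices, hence by at most `2^N`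
with `N ≤ k + l`, where `k` and `l` count the points of the two processes in `B`. Rescaled, `B`
has volume `vol B / n`, so `k` and `l` are Poisson with mean at most `sup κ · vol B`, uniformly
in `n` and `z`, and the fourth power `16^N ≤ 256^k + 256^l` has uniformly bounded expectation.
-/

section PersistentBetti

open Module

section LinearAlgebra

variable {K M : Type*} [DivisionRing K] [AddCommGroup M] [Module K M]

theorem finrank_inf_add_finrank_le_of_le {X Y : Submodule K M} (W : Submodule K M) (hXY : X ≤ Y)
    [FiniteDimensional K Y] :
    finrank K ↥(Y ⊓ W) + finrank K X ≤ finrank K ↥(X ⊓ W) + finrank K Y := by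
  have : FiniteDimensional K X := finiteDimensional_of_le hXY
  have : FiniteDimensional K ↥(Y ⊓ W) := finiteDimensional_of_le inf_le_left
  have hinf : Y ⊓ W ⊓ X = X ⊓ W := by rw [inf_right_comm, inf_eq_right.2 hXY]
  have hsum := finrank_sup_add_finrank_inf_eq (Y ⊓ W) X
  have hsup := finrank_mono (sup_le inf_le_left hXY : Y ⊓ W ⊔ X ≤ Y)
  rw [hinf] at hsum
  omega

theorem finrank_quotient_comap_subtype_add_finrank_inf (Z B : Submodule K M)
    [FiniteDimensional K Z] :
    finrank K (Z ⧸ B.comap Z.subtype) + finrank K ↥(Z ⊓ B) = finrank K Z := by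
  rw [← map_comap_subtype, finrank_map_subtype_eq]
  exact finrank_quotient_add_finrank _

theorem abs_finrank_quotient_comap_subtype_sub_le {Z Z' B B' : Submodule K M} (hZ : Z ≤ Z')
    (hB : B ≤ B') [FiniteDimensional K Z'] [FiniteDimensional K B'] {m : ℕ}
    (hZm : finrank K Z' ≤ finrank K Z + m) (hBm : finrank K B' ≤ finrank K B + m) :
    |(finrank K (Z' ⧸ B'.comap Z'.subtype) : ℤ) - finrank K (Z ⧸ B.comap Z.subtype)| ≤ m := by
  have : FiniteDimensional K Z := finiteDimensional_of_le hZ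
  have hβ := finrank_quotient_comap_subtype_add_finrank_inf Z B
  have hβ' := finrank_quotient_comap_subtype_add_finrank_inf Z' B'
  have hZB := finrank_mono (inf_le_inf hZ hB)
  have hZB' := finrank_inf_add_finrank_le_of_le B' hZ
  have hBZ := finrank_inf_add_finrank_le_of_le Z hB
  rw [inf_comm B', inf_comm B] at hBZ
  rw [abs_sub_le_iff]
  omega

end LinearAlgebra

variable {V : Type*}

theorem chainGroup_mono {L L' : Set (Finset V)} (h : L ⊆ L') (q : ℕ) :
    chainGroup L q ≤ chainGroup L' q :=
  span_mono fun _ ⟨σ, hσ, hq, hc⟩ => ⟨σ, h hσ, hq, hc⟩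

theorem chainGroup_le_sup_supported {L L' D : Set (Finset V)} (h : L' \ L ⊆ D) (q : ℕ) :
    chainGroup L' q ≤ chainGroup L q ⊔ Finsupp.supported (ZMod 2) (ZMod 2) D := by
  refine span_le.2 ?_
  rintro _ ⟨σ, hσ, hq, rfl⟩
  by_cases hσL : σ ∈ L
  · exact mem_sup_left (subset_span ⟨σ, hσL, hq, rfl⟩)
  · exact mem_sup_right (Finsupp.single_mem_supported _ _ (h ⟨hσ, hσL⟩))

theorem finiteDimensional_chainGroup {L : Set (Finset V)} (hL : L.Finite) (q : ℕ) :
    FiniteDimensional (ZMod 2) (chainGroup L q) :=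
  FiniteDimensional.span_of_finite _ <| (hL.image fun σ => Finsupp.single σ 1).subset <| by
    rintro _ ⟨σ, hσ, -, rfl⟩
    exact ⟨σ, hσ, rfl⟩

theorem finrank_supported (D : Finset (Finset V)) :
    finrank (ZMod 2) (Finsupp.supported (ZMod 2) (ZMod 2) (D : Set (Finset V))) = D.card := by
  rw [(Finsupp.supportedEquivFinsupp _).finrank_eq, finrank_finsupp_self]
  simp

theorem finrank_map_chainGroup_le {N : Type*} [AddCommGroup N] [Module (ZMod 2) N]
    (f : Chain V →ₗ[ZMod 2] N) {L L' : Set (Finset V)} (hL : L.Finite) {D : Finset (Finset V)}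
    (hD : L' \ L ⊆ D) (q : ℕ) :
    finrank (ZMod 2) (map f (chainGroup L' q)) ≤
      finrank (ZMod 2) (map f (chainGroup L q)) + D.card := by
  have := finiteDimensional_chainGroup hL q
  have : FiniteDimensional (ZMod 2) (Finsupp.supported (ZMod 2) (ZMod 2) (D : Set (Finset V))) :=
    Module.Finite.equiv (Finsupp.supportedEquivFinsupp _).symm
  set W := Finsupp.supported (ZMod 2) (ZMod 2) (D : Set (Finset V))
  calc finrank (ZMod 2) (map f (chainGroup L' q))
      ≤ finrank (ZMod 2) ↥(map f (chainGroup L q) ⊔ map f W) := by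
        rw [← Submodule.map_sup]
        exact finrank_mono (map_mono (chainGroup_le_sup_supported hD q))
    _ ≤ finrank (ZMod 2) (map f (chainGroup L q)) + finrank (ZMod 2) (map f W) :=
        finrank_add_le_finrank_add_finrank _ _
    _ ≤ _ := Nat.add_le_add_left ((finrank_map_le _ _).trans (finrank_supported D).le) _

theorem abs_pBetti_sub_le_card {Kf Kf' : ℝ → Set (Finset V)} {r s : ℝ} (hr : Kf r ⊆ Kf' r)
    (hs : Kf s ⊆ Kf' s) (hfr : (Kf' r).Finite) (hfs : (Kf' s).Finite) {D : Finset (Finset V)}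
    (hDr : Kf' r \ Kf r ⊆ D) (hDs : Kf' s \ Kf s ⊆ D) (q : ℕ) :
    |(pBetti Kf' q r s : ℤ) - pBetti Kf q r s| ≤ D.card := by
  have := finiteDimensional_chainGroup hfr q
  have := finiteDimensional_chainGroup hfs (q + 1)
  have hC := finrank_map_chainGroup_le LinearMap.id (hfr.subset hr) hDr q
  have hZ := finrank_inf_add_finrank_le_of_le (LinearMap.ker (bdry V)) (chainGroup_mono hr q)
  rw [map_id, map_id] at hC
  refine abs_finrank_quotient_comap_subtype_sub_le (inf_le_inf_right _ (chainGroup_mono hr q))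
    (map_mono (chainGroup_mono hs _)) ?_ (finrank_map_chainGroup_le _ (hfs.subset hs) hDs _)
  omega

end PersistentBetti

section CechRips

open Metric

variable {d : ℕ} {Kx : ℝ → Set (Pt d) → Set (Finset (Pt d))}

theorem cubeQ_subset_closedBall (z : Pt d) : cubeQ z ⊆ closedBall z (√d / 2) := by
  intro x hx
  rw [mem_closedBall, EuclideanSpace.dist_eq, show √d / 2 = √(∑ _i : Fin d, (1 / 2 : ℝ) ^ 2) by
    simp; ring]
  refine Real.sqrt_le_sqrt (Finset.sum_le_sum fun i _ => ?_)
  rw [Real.dist_eq, sq_abs]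
  nlinarith [hx i]

theorem isCompact_cube0 (d : ℕ) (c : ℝ) : IsCompact (cube0 d c) := by
  have : cube0 d c = EuclideanSpace.equiv (Fin d) ℝ ⁻¹' Set.univ.pi fun _ => Set.Icc 0 c := by
    ext x
    simp only [cube0, Set.mem_preimage, Set.mem_univ_pi, Set.mem_Icc]
    rfl
  rw [this]
  exact (EuclideanSpace.equiv (Fin d) ℝ).toHomeomorph.isCompact_preimage.2
    (isCompact_univ_pi fun _ => isCompact_Icc)

theorem cechOrRips_mem_iff (hKx : Kx = cechCx d ∨ Kx = ripsCx d) {t : ℝ} {S : Set (Pt d)}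
    {σ : Finset (Pt d)} : σ ∈ Kx t S ↔ ↑σ ⊆ S ∧ σ ∈ Kx t Set.univ := by
  rcases hKx with rfl | rfl <;> simp [cechCx, ripsCx]

theorem cechOrRips_finite (hKx : Kx = cechCx d ∨ Kx = ripsCx d) (t : ℝ) {S : Set (Pt d)}
    (hS : S.Finite) : (Kx t S).Finite :=
  (hS.toFinset.powerset.finite_toSet).subset fun σ hσ => by
    simpa using ((cechOrRips_mem_iff hKx).1 hσ).1

theorem cechOrRips_mono (hKx : Kx = cechCx d ∨ Kx = ripsCx d) (t : ℝ) {S S' : Set (Pt d)}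
    (h : S ⊆ S') : Kx t S ⊆ Kx t S' := fun σ hσ => by
  rw [cechOrRips_mem_iff hKx] at hσ ⊢
  exact ⟨hσ.1.trans h, hσ.2⟩

theorem cechOrRips_dist_le (hKx : Kx = cechCx d ∨ Kx = ripsCx d) {t : ℝ} {S : Set (Pt d)}
    {σ : Finset (Pt d)} (hσ : σ ∈ Kx t S) {x y : Pt d} (hx : x ∈ σ) (hy : y ∈ σ) :
    dist x y ≤ 2 * t := by
  rcases hKx with rfl | rfl
  · obtain ⟨-, -, c, hc⟩ := hσ
    simp only [Set.mem_iInter, mem_closedBall'] at hc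
    linarith [dist_triangle_right x y c, hc x (Finset.mem_coe.2 hx), hc y (Finset.mem_coe.2 hy)]
  · have hxy := dist_le_diam_of_mem σ.finite_toSet.isBounded hx hy
    linarith [hσ.2.2, dist_nonneg (x := x) (y := y)]

/-- A simplex that appears when the points `T` are added contains a point of `T`, hence lies
near `T`. -/
theorem cechOrRips_diff_subset (hKx : Kx = cechCx d ∨ Kx = ripsCx d) {t s : ℝ} (hts : t ≤ s)
    {S T : Set (Pt d)} {z : Pt d} (hTz : T ⊆ cubeQ z) :
    Kx t (S ∪ T) \ Kx t S ⊆ {σ | ↑σ ⊆ (S ∪ T) ∩ closedBall z (√d / 2 + 2 * s)} := by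
  rintro σ ⟨hσ, hσS⟩ x hx
  have hσST := ((cechOrRips_mem_iff hKx).1 hσ).1
  obtain ⟨y, hy, hyS⟩ := Set.not_subset.1 fun h => hσS ((cechOrRips_mem_iff hKx).2
    ⟨h, ((cechOrRips_mem_iff hKx).1 hσ).2⟩)
  have hyz := cubeQ_subset_closedBall z (hTz ((hσST hy).resolve_left hyS))
  refine ⟨hσST hx, mem_closedBall.2 ?_⟩
  linarith [dist_triangle x y z, cechOrRips_dist_le hKx hσ hx hy, mem_closedBall.1 hyz]

theorem sub_pBettiPts_pow_four_le (hKx : Kx = cechCx d ∨ Kx = ripsCx d) (q : ℕ) {r s : ℝ}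
    (hrs : r ≤ s) {S T : Set (Pt d)} (hS : S.Finite) (hT : T.Finite) {z : Pt d}
    (hTz : T ⊆ cubeQ z) :
    ((pBettiPts Kx q r s (S ∪ T) : ℝ) - pBettiPts Kx q r s S) ^ 4 ≤
      16 ^ ((S ∪ T) ∩ closedBall z (√d / 2 + 2 * s)).ncard := by
  have hW : ((S ∪ T) ∩ closedBall z (√d / 2 + 2 * s)).Finite := (hS.union hT).inter_of_left _
  have hnew : ∀ t ≤ s, Kx t (S ∪ T) \ Kx t S ⊆ ↑hW.toFinset.powerset := fun t ht σ hσ => by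
    simpa using cechOrRips_diff_subset hKx ht hTz hσ
  have hβ := abs_pBetti_sub_le_card (Kf := fun t => Kx t S) (Kf' := fun t => Kx t (S ∪ T))
    (cechOrRips_mono hKx r Set.subset_union_left)
    (cechOrRips_mono hKx s Set.subset_union_left) (cechOrRips_finite hKx r (hS.union hT))
    (cechOrRips_finite hKx s (hS.union hT)) (hnew r hrs) (hnew s le_rfl) q
  rw [Finset.card_powerset, ← Set.ncard_eq_toFinset_card _ hW] at hβ
  have hβ' : |(pBettiPts Kx q r s (S ∪ T) : ℝ) - pBettiPts Kx q r s S| ≤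
      2 ^ ((S ∪ T) ∩ closedBall z (√d / 2 + 2 * s)).ncard := by
    exact_mod_cast hβ
  calc _ = |(pBettiPts Kx q r s (S ∪ T) : ℝ) - pBettiPts Kx q r s S| ^ 4 :=
        (Even.pow_abs (by decide) _).symm
    _ ≤ (2 ^ ((S ∪ T) ∩ closedBall z (√d / 2 + 2 * s)).ncard) ^ 4 :=
        pow_le_pow_left₀ (abs_nonneg _) hβ' 4
    _ = _ := by rw [← pow_mul, mul_comm, pow_mul]; norm_num

end CechRips

section PointProcess

open MeasureTheory Metric
open scoped ENNReal

variable {Ω : Type*} [MeasurableSpace Ω] {μ : Measure Ω}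

/-- `E` need not be measurable, so `μ E = μ univ` is weaker than `∀ᵐ ω ∂μ, ω ∈ E`; the events
of `IsPoissonPP.counts` are of this kind. -/
theorem integral_le_of_forall_mem_le [IsFiniteMeasure μ] {E : Set Ω} (hE : μ E = μ Set.univ)
    {g : Ω → ℝ} {H : Ω → ℝ≥0∞} (hH : AEMeasurable H μ) (hgH : ∀ ω ∈ E, ‖g ω‖ₑ ≤ H ω) {c : ℝ}
    (hc : 0 ≤ c) (hHc : ∫⁻ ω, H ω ∂μ ≤ ENNReal.ofReal c) : ∫ ω, g ω ∂μ ≤ c := by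
  refine (le_abs_self _).trans ?_
  rw [← Real.norm_eq_abs, ← ENNReal.ofReal_le_ofReal_iff hc, ofReal_norm]
  refine le_trans ?_ hHc
  by_cases hg : AEStronglyMeasurable g μ
  · refine (enorm_integral_le_lintegral_enorm g).trans (lintegral_mono_ae ?_)
    rw [ae_iff_measure_eq (nullMeasurableSet_le hg.enorm hH)]
    exact le_antisymm (measure_mono (Set.subset_univ _)) (hE ▸ measure_mono hgH)
  · simp [integral_non_aestronglyMeasurable hg]

variable {α : Type*}

/-- A measurable majorant of `ω ↦ c ^ #(P ω ∩ A)`, which itself need not be measurable. -/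
noncomputable def countMajorant (μ : Measure Ω) (P : Ω → Set α) (A : Set α) (c : ℝ) (ω : Ω) :
    ℝ≥0∞ :=
  ∑' k : ℕ, (toMeasurable μ {ω | (P ω ∩ A).ncard = k ∧ (P ω ∩ A).Finite}).indicator
    (fun _ => ENNReal.ofReal (c ^ k)) ω

theorem measurable_countMajorant (μ : Measure Ω) (P : Ω → Set α) (A : Set α) (c : ℝ) :
    Measurable (countMajorant μ P A c) :=
  Measurable.tsum fun _ => measurable_const.indicator (measurableSet_toMeasurable _ _)

theorem ofReal_pow_ncard_le_countMajorant {P : Ω → Set α} {A : Set α} {ω : Ω}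
    (hω : (P ω ∩ A).Finite) (c : ℝ) :
    ENNReal.ofReal (c ^ (P ω ∩ A).ncard) ≤ countMajorant μ P A c ω := by
  refine le_of_eq_of_le ?_ (ENNReal.le_tsum (P ω ∩ A).ncard)
  have hωk : ω ∈ {ω' | (P ω' ∩ A).ncard = (P ω ∩ A).ncard ∧ (P ω' ∩ A).Finite} := ⟨rfl, hω⟩
  rw [Set.indicator_of_mem (subset_toMeasurable μ _ hωk)]

theorem lintegral_countMajorant_eq_tsum {P : Ω → Set α} {A : Set α} (c : ℝ) {p : ℕ → ℝ}
    (hp : ∀ k, μ {ω | (P ω ∩ A).ncard = k ∧ (P ω ∩ A).Finite} = ENNReal.ofReal (p k)) :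
    ∫⁻ ω, countMajorant μ P A c ω ∂μ = ∑' k, ENNReal.ofReal (c ^ k) * ENNReal.ofReal (p k) := by
  unfold countMajorant
  rw [lintegral_tsum fun k =>
    (measurable_const.indicator (measurableSet_toMeasurable _ _)).aemeasurable]
  congr with k
  rw [lintegral_indicator_const (measurableSet_toMeasurable _ _), measure_toMeasurable, hp]

theorem ncard_image_union_inter_le {β : Type*} (m : α → β) {S S' : Set α} {B Q : Set β}
    (hS : (S ∩ m ⁻¹' B).Finite) (hS' : (S' ∩ m ⁻¹' B).Finite) :
    ((m '' S ∪ m '' S' ∩ Q) ∩ B).ncard ≤ (S ∩ m ⁻¹' B).ncard + (S' ∩ m ⁻¹' B).ncard := by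
  calc _ ≤ (m '' (S ∩ m ⁻¹' B) ∪ m '' (S' ∩ m ⁻¹' B)).ncard := by
        refine Set.ncard_le_ncard ?_ ((hS.image m).union (hS'.image m))
        rw [Set.image_inter_preimage, Set.image_inter_preimage]
        rintro x ⟨hx | ⟨hx, -⟩, hxB⟩
        exacts [Or.inl ⟨hx, hxB⟩, Or.inr ⟨hx, hxB⟩]
    _ ≤ _ := (Set.ncard_union_le _ _).trans
        (add_le_add (Set.ncard_image_le hS) (Set.ncard_image_le hS'))

namespace IsPoissonPP

variable {d : ℕ} {f : Pt d → ℝ} {P : Ω → Set (Pt d)}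

theorem lintegral_countMajorant (hP : IsPoissonPP μ f P) {A : Set (Pt d)} (hA : MeasurableSet A)
    (hfA : IntegrableOn f A) (hI : 0 ≤ ∫ x in A, f x) {c : ℝ} (hc : 0 ≤ c) :
    ∫⁻ ω, countMajorant μ P A c ω ∂μ = ENNReal.ofReal (Real.exp ((c - 1) * ∫ x in A, f x)) := by
  rw [lintegral_countMajorant_eq_tsum c (hP.counts A hA hfA)]
  generalize ∫ x in A, f x = I at hI ⊢
  have hsum : HasSum (fun k : ℕ => Real.exp (-I) * ((c * I) ^ k / k.factorial))
      (Real.exp (-I) * Real.exp (c * I)) := by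
    rw [Real.exp_eq_exp_ℝ]
    exact (NormedSpace.expSeries_div_hasSum_exp (c * I)).mul_left _
  calc _ = ∑' k : ℕ, ENNReal.ofReal (Real.exp (-I) * ((c * I) ^ k / k.factorial)) := by
        congr with k
        rw [← ENNReal.ofReal_mul (by positivity), mul_pow]
        ring_nf
    _ = _ := by
        rw [← ENNReal.ofReal_tsum_of_nonneg (fun k => by positivity) hsum.summable, hsum.tsum_eq,
          ← Real.exp_add]
        ring_nf

theorem measure_inter_eq_empty (hP : IsPoissonPP μ f P) {A : Set (Pt d)} (hA : MeasurableSet A)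
    (hf : ∀ x ∈ A, f x = 0) : μ {ω | P ω ∩ A = ∅} = 1 := by
  have h := hP.counts A hA (integrableOn_zero.congr_fun (fun x hx => (hf x hx).symm) hA) 0
  rw [setIntegral_eq_zero_of_forall_eq_zero hf] at h
  convert h using 2
  · ext ω
    exact ⟨fun h => by simp [show P ω ∩ A = ∅ from h], fun h => (Set.ncard_eq_zero h.2).1 h.1⟩
  · simp

theorem measure_setOf_finite [IsProbabilityMeasure μ] (hP : IsPoissonPP μ f P) {K : Set (Pt d)}
    (hK : IsCompact K) (hf : ∀ x ∉ K, f x = 0) : μ {ω | (P ω).Finite} = 1 := by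
  refine le_antisymm prob_le_one ?_
  calc 1 = μ ({ω | P ω ∩ Kᶜ = ∅} ∩ {ω | ∀ C, IsCompact C → (P ω ∩ C).Finite}) := by
        rw [measure_inter_conull (mem_ae_iff.1 hP.locallyFinite),
          hP.measure_inter_eq_empty hK.measurableSet.compl hf]
    _ ≤ _ := measure_mono fun ω ⟨h0, hfin⟩ => by
        have hPK : (P ω ∩ K ∪ P ω ∩ Kᶜ).Finite := by
          rw [show P ω ∩ Kᶜ = ∅ from h0, Set.union_empty]
          exact hfin K hK
        rwa [Set.inter_union_compl] at hPK

end IsPoissonPP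

end PointProcess

section Moments

open MeasureTheory Metric
open scoped ENNReal

variable {Ω : Type*} [MeasurableSpace Ω] {μ : Measure Ω} [IsProbabilityMeasure μ] {d : ℕ}
  {Kx : ℝ → Set (Pt d) → Set (Finset (Pt d))}

theorem pow_le_sq_pow_add_sq_pow {a : ℝ} (ha : 1 ≤ a) {N k l : ℕ} (h : N ≤ k + l) :
    a ^ N ≤ (a ^ 2) ^ k + (a ^ 2) ^ l := by
  have ha0 : 0 ≤ a := zero_le_one.trans ha
  have hsq := two_mul_le_add_sq (a ^ k) (a ^ l)
  have hkl := mul_nonneg (pow_nonneg ha0 k) (pow_nonneg ha0 l)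
  calc a ^ N ≤ a ^ k * a ^ l := by rw [← pow_add]; exact pow_le_pow_right₀ ha h
    _ ≤ (a ^ k) ^ 2 + (a ^ l) ^ 2 := by linarith
    _ = _ := by rw [← pow_mul, ← pow_mul, mul_comm k, mul_comm l, pow_mul, pow_mul]

theorem integral_sub_pBettiPts_pow_four_le (hKx : Kx = cechCx d ∨ Kx = ripsCx d) (q : ℕ)
    {r s : ℝ} (hrs : r ≤ s) {f : Pt d → ℝ} (hf0 : ∀ x, 0 ≤ f x) (hfi : Integrable f)
    {P P' : Ω → Set (Pt d)} (hP : IsPoissonPP μ f P) (hP' : IsPoissonPP μ f P')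
    (hPfin : μ {ω | (P ω).Finite} = 1) {m : Pt d → Pt d} (hm : IsProperMap m) (z : Pt d) :
    ∫ ω, ((pBettiPts Kx q r s (m '' P ω ∪ m '' P' ω ∩ cubeQ z) : ℝ) -
        pBettiPts Kx q r s (m '' P ω)) ^ 4 ∂μ ≤
      2 * Real.exp (255 * ∫ x in m ⁻¹' closedBall z (√d / 2 + 2 * s), f x) := by
  set A := m ⁻¹' closedBall z (√d / 2 + 2 * s)
  have hA : IsCompact A := hm.isCompact_preimage (isCompact_closedBall _ _)
  have hI : 0 ≤ ∫ x in A, f x := setIntegral_nonneg hA.measurableSet fun x _ => hf0 x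
  have hE : μ ({ω | (P ω).Finite} ∩ {ω | ∀ C, IsCompact C → (P' ω ∩ C).Finite}) = μ Set.univ := by
    rw [measure_inter_conull (mem_ae_iff.1 hP'.locallyFinite), hPfin, measure_univ]
  refine integral_le_of_forall_mem_le hE
    (H := fun ω => countMajorant μ P A (16 ^ 2) ω + countMajorant μ P' A (16 ^ 2) ω)
    ((measurable_countMajorant _ _ _ _).add (measurable_countMajorant _ _ _ _)).aemeasurable
    ?domination (by positivity) ?bound
  case bound =>
    rw [lintegral_add_left (measurable_countMajorant _ _ _ _),
      hP.lintegral_countMajorant hA.measurableSet hfi.integrableOn hI (by norm_num),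
      hP'.lintegral_countMajorant hA.measurableSet hfi.integrableOn hI (by norm_num), ← two_mul,
      ENNReal.ofReal_mul zero_le_two]
    norm_num
  rintro ω ⟨hPω, hP'ω⟩
  have hT : (m '' P' ω ∩ cubeQ z).Finite := by
    refine ((hP'ω _ (hm.isCompact_preimage (isCompact_closedBall z (√d / 2)))).image m).subset ?_
    rw [Set.image_inter_preimage]
    exact Set.inter_subset_inter_right _ (cubeQ_subset_closedBall z)
  have hN := ncard_image_union_inter_le m (Q := cubeQ z) (hPω.inter_of_left A) (hP'ω A hA)
  rw [← ofReal_norm, Real.norm_of_nonneg (by positivity)]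
  refine (ENNReal.ofReal_le_ofReal ((sub_pBettiPts_pow_four_le hKx q hrs (hPω.image m) hT
    Set.inter_subset_right).trans (pow_le_sq_pow_add_sq_pow (by norm_num) hN))).trans ?_
  rw [ENNReal.ofReal_add (by positivity) (by positivity)]
  exact add_le_add (ofReal_pow_ncard_le_countMajorant (hPω.inter_of_left A) _)
    (ofReal_pow_ncard_le_countMajorant (hP'ω A hA) _)

end Moments

section Scaling

open MeasureTheory

variable {d : ℕ}

theorem volume_preimage_rpow_inv_smul (hd : d ≠ 0) {t : ℝ} (ht : 0 < t) (B : Set (Pt d)) :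
    volume ((fun x : Pt d => t ^ ((1 : ℝ) / d) • x) ⁻¹' B) = ENNReal.ofReal t⁻¹ * volume B := by
  rw [Measure.addHaar_preimage_smul _ (by positivity), finrank_euclideanSpace_fin, one_div,
    Real.rpow_inv_natCast_pow ht.le hd, abs_of_pos (inv_pos.2 ht)]

theorem setIntegral_preimage_rpow_inv_smul_le (hd : d ≠ 0) {κ : Pt d → ℝ} (hκ : Integrable κ)
    {Cb : ℝ} (hCb : ∀ x, κ x ≤ Cb) {t : ℝ} (ht : 0 < t) {B : Set (Pt d)} (hB : volume B ≠ ⊤) :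
    ∫ x in (fun x : Pt d => t ^ ((1 : ℝ) / d) • x) ⁻¹' B, t * κ x ≤ Cb * volume.real B := by
  have hvol := volume_preimage_rpow_inv_smul hd ht B
  calc _ ≤ ∫ x in (fun x : Pt d => t ^ ((1 : ℝ) / d) • x) ⁻¹' B, t * Cb :=
        setIntegral_mono (hκ.const_mul t).integrableOn
          (integrableOn_const (by rw [hvol]; exact ENNReal.mul_ne_top ENNReal.ofReal_ne_top hB))
          fun x => mul_le_mul_of_nonneg_left (hCb x) ht.le
    _ = Cb * volume.real B := by
        rw [setIntegral_const, smul_eq_mul, measureReal_def, measureReal_def, hvol,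
          ENNReal.toReal_mul, ENNReal.toReal_ofReal (inv_nonneg.2 ht.le)]
        field_simp

end Scaling

section Degenerate

open MeasureTheory Metric

variable {Ω : Type*} [MeasurableSpace Ω] {μ : Measure Ω} [IsProbabilityMeasure μ] {d : ℕ}
  {Kx : ℝ → Set (Pt d) → Set (Finset (Pt d))}

theorem integral_sub_pBettiPts_zero_smul_pow_four_le (hKx : Kx = cechCx d ∨ Kx = ripsCx d)
    (q : ℕ) {r s : ℝ} (hrs : r ≤ s) (P P' : Ω → Set (Pt d)) (z : Pt d) :
    ∫ ω, ((pBettiPts Kx q r s ((fun x : Pt d => (0 : ℝ) • x) '' P ω ∪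
        (fun x : Pt d => (0 : ℝ) • x) '' P' ω ∩ cubeQ z) : ℝ) -
        pBettiPts Kx q r s ((fun x : Pt d => (0 : ℝ) • x) '' P ω)) ^ 4 ∂μ ≤ 16 := by
  have h0 : ∀ U : Set (Pt d), (fun x : Pt d => (0 : ℝ) • x) '' U ⊆ {0} := by
    rintro U _ ⟨x, -, rfl⟩
    simp
  refine (Real.le_norm_self _).trans ((norm_integral_le_of_norm_le_const
    (Filter.Eventually.of_forall fun ω => ?_)).trans_eq (by rw [probReal_univ (μ := μ), mul_one]))
  have hS := h0 (P ω)
  have hT : _ ∩ cubeQ z ⊆ _ := Set.inter_subset_left.trans (h0 (P' ω))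
  rw [Real.norm_of_nonneg (by positivity)]
  refine (sub_pBettiPts_pow_four_le hKx q hrs ((Set.finite_singleton 0).subset hS)
    ((Set.finite_singleton 0).subset hT) Set.inter_subset_right).trans ?_
  calc _ ≤ (16 : ℝ) ^ 1 := pow_le_pow_right₀ (by norm_num) <|
        (Set.ncard_le_ncard (Set.inter_subset_left.trans (Set.union_subset hS hT))).trans
          (Set.ncard_singleton 0).le
    _ = 16 := pow_one _

end Degenerate

open MeasureTheory in
theorem fourth_moment_add_cube_general {Ω : Type*} [MeasurableSpace Ω]
    (μ : Measure Ω) [IsProbabilityMeasure μ] {d : ℕ} (hd : 1 ≤ d)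
    (κ : Pt d → ℝ) (hκ0 : ∀ x, 0 ≤ κ x) (hκb : ∃ Cb : ℝ, ∀ x, κ x ≤ Cb)
    (hκsupp : ∀ x, x ∉ cube0 d 1 → κ x = 0) (hκint : ∫ x, κ x = 1)
    (P P' : ℕ → Ω → Set (Pt d))
    (hP : ∀ n : ℕ, IsPoissonPP μ (fun x => (n : ℝ) * κ x) (P n))
    (hP' : ∀ n : ℕ, IsPoissonPP μ (fun x => (n : ℝ) * κ x) (P' n))
    (Kx : ℝ → Set (Pt d) → Set (Finset (Pt d))) (hKx : Kx = cechCx d ∨ Kx = ripsCx d)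
    (q : ℕ) (r s : ℝ) (hrs : r ≤ s) :
    ∃ C : ℝ, ∀ n : ℕ, ∀ z : Pt d, (∀ i, ∃ k : ℤ, z i = (k : ℝ)) →
      (cubeQ z ∩ cube0 d ((n : ℝ) ^ ((1 : ℝ) / d))).Nonempty →
      ∫ ω, (((pBettiPts Kx q r s
              (((fun x : Pt d => ((n : ℝ) ^ ((1 : ℝ) / d)) • x) '' P n ω) ∪
                ((fun x : Pt d => ((n : ℝ) ^ ((1 : ℝ) / d)) • x) '' P' n ω ∩ cubeQ z)) :
              ℝ) -
            (pBettiPts Kx q r s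
              ((fun x : Pt d => ((n : ℝ) ^ ((1 : ℝ) / d)) • x) '' P n ω) : ℝ)) ^ 4) ∂μ
        ≤ C := by
  obtain ⟨Cb, hCb⟩ := hκb
  have hd0 : d ≠ 0 := by omega
  have hκi : Integrable κ := Integrable.of_integral_ne_zero (by simp [hκint])
  set V := volume.real (Metric.closedBall (0 : Pt d) (√d / 2 + 2 * s)) with hV
  refine ⟨max 16 (2 * Real.exp (255 * (Cb * V))), fun n z _ _ => ?_⟩
  rcases Nat.eq_zero_or_pos n with rfl | hn
  · rw [Nat.cast_zero, Real.zero_rpow (by positivity)]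
    exact le_max_of_le_left (integral_sub_pBettiPts_zero_smul_pow_four_le hKx q hrs _ _ z)
  have ha : (n : ℝ) ^ ((1 : ℝ) / d) ≠ 0 := by positivity
  have hm : IsProperMap fun x : Pt d => (n : ℝ) ^ ((1 : ℝ) / d) • x :=
    (Homeomorph.smulOfNeZero _ ha).isProperMap
  refine le_max_of_le_right ((integral_sub_pBettiPts_pow_four_le hKx q hrs
    (fun x => mul_nonneg n.cast_nonneg (hκ0 x)) (hκi.const_mul _) (hP n) (hP' n)
    ((hP n).measure_setOf_finite (isCompact_cube0 d 1) fun x hx => by simp [hκsupp x hx])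
    hm z).trans ?_)
  gcongr
  rw [hV, measureReal_def, ← Measure.addHaar_closedBall_center volume z, ← measureReal_def]
  exact setIntegral_preimage_rpow_inv_smul_le hd0 hκi hCb (by positivity)
    measure_closedBall_lt_top.ne

open MeasureTheory in
/-- Uniform fourth-moment bound for add-cube differences: let
`P_n`, `P'_n` be independent Poisson processes on `[0,1]^d` with intensity `nκ`, where
`κ` is a bounded density supported in `[0,1]^d`, and let `z_j` range over the lattice
points whose cube `Q(z_j) = (−1/2,1/2]^d + z_j` intersects `[0, n^{1/d}]^d`.  Then for
every fixed `(r,s)`,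
`sup_{n,j} E[ |β_q^{r,s}(K(n^{1/d}P_n ∪ (n^{1/d}P'_n ∩ Q(z_j)))) −
β_q^{r,s}(K(n^{1/d}P_n))|⁴ ] < ∞`. -/
theorem fourth_moment_add_cube {Ω : Type*} [MeasurableSpace Ω]
    (μ : Measure Ω) [IsProbabilityMeasure μ] {d : ℕ} (hd : 1 ≤ d)
    (κ : Pt d → ℝ) (hκ0 : ∀ x, 0 ≤ κ x) (hκb : ∃ Cb : ℝ, ∀ x, κ x ≤ Cb)
    (hκsupp : ∀ x, x ∉ cube0 d 1 → κ x = 0) (hκint : ∫ x, κ x = 1)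
    (P P' : ℕ → Ω → Set (Pt d))
    (hP : ∀ n : ℕ, IsPoissonPP μ (fun x => (n : ℝ) * κ x) (P n))
    (hP' : ∀ n : ℕ, IsPoissonPP μ (fun x => (n : ℝ) * κ x) (P' n))
    (hind : ∀ n : ℕ, IndepPP μ (P n) (P' n))
    (Kx : ℝ → Set (Pt d) → Set (Finset (Pt d))) (hKx : Kx = cechCx d ∨ Kx = ripsCx d)
    (q : ℕ) (r s : ℝ) (hr : 0 ≤ r) (hrs : r ≤ s) :
    ∃ C : ℝ, ∀ n : ℕ, ∀ z : Pt d, (∀ i, ∃ k : ℤ, z i = (k : ℝ)) →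
      (cubeQ z ∩ cube0 d ((n : ℝ) ^ ((1 : ℝ) / d))).Nonempty →
      ∫ ω, (((pBettiPts Kx q r s
              (((fun x : Pt d => ((n : ℝ) ^ ((1 : ℝ) / d)) • x) '' P n ω) ∪
                ((fun x : Pt d => ((n : ℝ) ^ ((1 : ℝ) / d)) • x) '' P' n ω ∩ cubeQ z)) :
              ℝ) -
            (pBettiPts Kx q r s
              ((fun x : Pt d => ((n : ℝ) ^ ((1 : ℝ) / d)) • x) '' P n ω) : ℝ)) ^ 4) ∂μ
        ≤ C :=
  fourth_moment_add_cube_general μ hd κ hκ0 hκb hκsupp hκint P P' hP hP' Kx hKx q r s hrs
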